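/- Vanishing covariance of the encoding and noise generators is necessary for no loss of precision: Let H be a finite-dimensional complex inner product space, ψ ∈ H a unit vector, K a self-adjoint operator on H, (P_i)_{i∈ι} a finite family of self-adjoint idempotent operators on H with P_i P_j = 0 for i ≠ j and ∑_i P_i = id, and let G := ∑_i g_i P_i with g_i ∈ ℝ (a self-adjoint noise generator with spectral projections P_i); set p_i := ⟨ψ, P_i ψ⟩. If Bob's quantum Fisher information equals Alice's, i.e. 4‖Kψ‖² − 4 ∑_{i : p_i > 0} (Re⟨ψ, P_i K ψ⟩)² / p_i = 4(⟨ψ, K²ψ⟩ − ⟨ψ, Kψ⟩²), then Cov_ψ(G, K) := ½⟨ψ, (GK + KG)ψ⟩ − ⟨ψ, Gψ⟩⟨ψ, Kψ⟩ = 0. -/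

import Mathlib

/-!
Write `pᵢ = ⟨ψ, Pᵢψ⟩ = ‖Pᵢψ‖²` and `aᵢ = Re⟨ψ, PᵢKψ⟩`, so that `∑ pᵢ = 1` and `∑ aᵢ = ⟨K⟩`.
The no-loss hypothesis says `∑ aᵢ²/pᵢ = (∑ aᵢ)²`, the equality case of Cauchy–Schwarz
(Sedrakyan's form): `∑ (aᵢ - ⟨K⟩pᵢ)²/pᵢ` vanishes, hence `aᵢ = ⟨K⟩pᵢ`. Since `G` and `K` are
self-adjoint, the symmetrised expectation `Re⟨ψ, (GK + KG)ψ⟩/2` is `Re⟨ψ, GKψ⟩ = ∑ gᵢaᵢ`,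
which is then `⟨K⟩ ∑ gᵢpᵢ = ⟨K⟩⟨G⟩`.
-/

open Finset RCLike

theorem Finset.eq_sum_mul_of_sum_sq_div_eq_sq {ι : Type*} (s : Finset ι) {p a : ι → ℝ}
    (hp : ∀ i ∈ s, 0 ≤ p i) (hp_sum : ∑ i ∈ s, p i = 1) (ha : ∀ i ∈ s, p i = 0 → a i = 0)
    (h : ∑ i ∈ s, (if 0 < p i then a i ^ 2 / p i else 0) = (∑ i ∈ s, a i) ^ 2) :
    ∀ i ∈ s, a i = (∑ j ∈ s, a j) * p i := by
  set k := ∑ j ∈ s, a j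
  have hexpand : ∀ i ∈ s, (if 0 < p i then (a i - k * p i) ^ 2 / p i else 0)
      = (if 0 < p i then a i ^ 2 / p i else 0) - 2 * k * a i + k ^ 2 * p i := by
    intro i hi
    rcases (hp i hi).eq_or_lt with h0 | hpos
    · simp [← h0, ha i hi h0.symm]
    · simp only [if_pos hpos]
      field_simp
      ring
  have hzero : ∑ i ∈ s, (if 0 < p i then (a i - k * p i) ^ 2 / p i else 0) = 0 := by
    rw [sum_congr rfl hexpand, sum_add_distrib, sum_sub_distrib, ← mul_sum, ← mul_sum, h, hp_sum]
    ring
  rw [sum_eq_zero_iff_of_nonneg fun i _ => by split_ifs <;> positivity] at hzero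
  intro i hi
  rcases (hp i hi).eq_or_lt with h0 | hpos
  · simp [← h0, ha i hi h0.symm]
  · have hi' := hzero i hi
    rwa [if_pos hpos, div_eq_zero_iff, or_iff_left hpos.ne', sq_eq_zero_iff, sub_eq_zero] at hi'

section

variable {𝕜 E : Type*} [RCLike 𝕜] [NormedAddCommGroup E] [InnerProductSpace 𝕜 E] [CompleteSpace E]

theorem IsSelfAdjoint.re_inner_apply_apply_self {A : E →L[𝕜] E} (hA : IsSelfAdjoint A) (x : E) :
    re (inner 𝕜 x (A (A x))) = ‖A x‖ ^ 2 := by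
  rw [← ContinuousLinearMap.coe_coe A, ← hA.isSymmetric, inner_self_eq_norm_sq]

theorem IsStarProjection.re_inner_apply_self {P : E →L[𝕜] E} (hP : IsStarProjection P) (x : E) :
    re (inner 𝕜 x (P x)) = ‖P x‖ ^ 2 := by
  conv_lhs => rw [← hP.isIdempotentElem.eq]
  exact hP.isSelfAdjoint.re_inner_apply_apply_self x

theorem IsSelfAdjoint.inner_apply_eq_zero {A : E →L[𝕜] E} (hA : IsSelfAdjoint A) {x : E}
    (hx : A x = 0) (y : E) : inner 𝕜 x (A y) = 0 := by
  rw [← ContinuousLinearMap.coe_coe A, ← hA.isSymmetric, ContinuousLinearMap.coe_coe, hx,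
    inner_zero_left]

theorem IsSelfAdjoint.re_inner_apply_apply_comm {A B : E →L[𝕜] E} (hA : IsSelfAdjoint A)
    (hB : IsSelfAdjoint B) (x : E) : re (inner 𝕜 x (A (B x))) = re (inner 𝕜 x (B (A x))) := by
  rw [← ContinuousLinearMap.coe_coe A, ← ContinuousLinearMap.coe_coe B, ← hA.isSymmetric,
    ← inner_conj_symm, conj_re, hB.isSymmetric]

end

section

variable {𝕜 E ι : Type*} [RCLike 𝕜] [NormedAddCommGroup E] [InnerProductSpace 𝕜 E]

theorem re_inner_sum_smul_apply (s : Finset ι) (g : ι → ℝ) (P : ι → E →L[𝕜] E) (x y : E) :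
    re (inner 𝕜 x ((∑ i ∈ s, (g i : 𝕜) • P i) y)) = ∑ i ∈ s, g i * re (inner 𝕜 x (P i y)) := by
  simp [inner_sum, inner_smul_right]

theorem sum_re_inner_apply_of_sum_eq_one (s : Finset ι) {P : ι → E →L[𝕜] E}
    (hP : ∑ i ∈ s, P i = 1) (x y : E) : ∑ i ∈ s, re (inner 𝕜 x (P i y)) = re (inner 𝕜 x y) := by
  rw [← map_sum, ← inner_sum, ← _root_.sum_apply, hP, one_apply_eq_self]

end

theorem qrf_no_loss_implies_cov_zero_general
    {H : Type*} [NormedAddCommGroup H] [InnerProductSpace ℂ H] [FiniteDimensional ℂ H]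
    {ι : Type*} [Fintype ι]
    (ψ : H) (hψ : ‖ψ‖ = 1)
    (K : H →L[ℂ] H) (hK : IsSelfAdjoint K)
    (P : ι → H →L[ℂ] H)
    (hsa : ∀ i, IsSelfAdjoint (P i))
    (hidem : ∀ i, P i * P i = P i)
    (hsum : ∑ i, P i = 1)
    (g : ι → ℝ) (G : H →L[ℂ] H)
    (hG : G = ∑ i, (g i : ℂ) • P i)
    (hnoloss : 4 * ‖K ψ‖ ^ 2
        - 4 * ∑ i, (if 0 < ((inner ℂ ψ (P i ψ) : ℂ)).re
            then ((inner ℂ ψ (P i (K ψ)) : ℂ)).re ^ 2 / ((inner ℂ ψ (P i ψ) : ℂ)).re else 0)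
      = 4 * (((inner ℂ ψ (K (K ψ)) : ℂ)).re - (((inner ℂ ψ (K ψ) : ℂ)).re) ^ 2)) :
    ((inner ℂ ψ (G (K ψ)) : ℂ) + (inner ℂ ψ (K (G ψ)) : ℂ)).re / 2
      - ((inner ℂ ψ (G ψ) : ℂ)).re * ((inner ℂ ψ (K ψ) : ℂ)).re = 0 := by
  -- read `Complex.re` as `RCLike.re`, the form of the lemmas above
  simp only [← RCLike.re_to_complex, map_add] at hnoloss ⊢
  have hP (i : ι) : IsStarProjection (P i) := ⟨hidem i, hsa i⟩
  have hp_nonneg (i : ι) : 0 ≤ re (inner ℂ ψ (P i ψ)) := (hP i).re_inner_apply_self ψ ▸ sq_nonneg _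
  have hp_sum : ∑ i, re (inner ℂ ψ (P i ψ)) = 1 := by
    rw [sum_re_inner_apply_of_sum_eq_one _ hsum, inner_self_eq_norm_sq, hψ, one_pow]
  have ha_zero (i : ι) (hi : re (inner ℂ ψ (P i ψ)) = 0) : re (inner ℂ ψ (P i (K ψ))) = 0 := by
    rw [(hP i).re_inner_apply_self, sq_eq_zero_iff, norm_eq_zero] at hi
    rw [(hsa i).inner_apply_eq_zero hi, map_zero]
  have ha_sum := sum_re_inner_apply_of_sum_eq_one univ hsum ψ (K ψ)
  have ha_prop := univ.eq_sum_mul_of_sum_sq_div_eq_sq (fun i _ => hp_nonneg i) hp_sum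
    (fun i _ => ha_zero i) (by rw [ha_sum]; linarith [hK.re_inner_apply_apply_self ψ])
  have hG_sa : IsSelfAdjoint G :=
    hG ▸ isSelfAdjoint_sum _ fun i _ => IsSelfAdjoint.smul (Complex.conj_ofReal (g i)) (hsa i)
  have hG_apply (x : H) : re (inner ℂ ψ (G x)) = ∑ i, g i * re (inner ℂ ψ (P i x)) := by
    rw [hG]
    exact re_inner_sum_smul_apply univ g P ψ x
  have hcov : ∑ i, g i * re (inner ℂ ψ (P i (K ψ)))
      = (∑ i, g i * re (inner ℂ ψ (P i ψ))) * re (inner ℂ ψ (K ψ)) := by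
    rw [← ha_sum, sum_mul]
    exact sum_congr rfl fun i hi => by rw [ha_prop i hi]; ring
  rw [hK.re_inner_apply_apply_comm hG_sa, hG_apply, hG_apply, hcov]
  ring

/-- Vanishing covariance of the encoding generator `K` and the noise generator
`G = ∑ᵢ gᵢ Pᵢ` is a necessary condition for no loss of precision: if Bob's
quantum Fisher information equals Alice's, then `Cov_ψ(G, K) = 0`. -/
theorem qrf_no_loss_implies_cov_zero
    {H : Type*} [NormedAddCommGroup H] [InnerProductSpace ℂ H] [FiniteDimensional ℂ H]
    {ι : Type*} [Fintype ι]
    (ψ : H) (hψ : ‖ψ‖ = 1)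
    (K : H →L[ℂ] H) (hK : IsSelfAdjoint K)
    (P : ι → H →L[ℂ] H)
    (hsa : ∀ i, IsSelfAdjoint (P i))
    (hidem : ∀ i, P i * P i = P i)
    (horth : ∀ i j, i ≠ j → P i * P j = 0)
    (hsum : ∑ i, P i = 1)
    (g : ι → ℝ) (G : H →L[ℂ] H)
    (hG : G = ∑ i, (g i : ℂ) • P i)
    (hnoloss : 4 * ‖K ψ‖ ^ 2
        - 4 * ∑ i, (if 0 < ((inner ℂ ψ (P i ψ) : ℂ)).re
            then ((inner ℂ ψ (P i (K ψ)) : ℂ)).re ^ 2 / ((inner ℂ ψ (P i ψ) : ℂ)).re else 0)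
      = 4 * (((inner ℂ ψ (K (K ψ)) : ℂ)).re - (((inner ℂ ψ (K ψ) : ℂ)).re) ^ 2)) :
    ((inner ℂ ψ (G (K ψ)) : ℂ) + (inner ℂ ψ (K (G ψ)) : ℂ)).re / 2
      - ((inner ℂ ψ (G ψ) : ℂ)).re * ((inner ℂ ψ (K ψ) : ℂ)).re = 0 :=
  qrf_no_loss_implies_cov_zero_general ψ hψ K hK P hsa hidem hsum g G hG hnoloss
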